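/- For every odd prime p, the polynomial f_p is the minimal polynomial over ℚ of the real algebraic number 2·cos(2π/p) − 2. -/

import Mathlib

/-!
Put `X = 2 cos 2u - 2 = -4 sin² u`. The coefficients of `f_n`, viewed as functions of `n`, satisfy
a three-term recurrence (`fCoeff_add_two_succ`) which makes `f_{n+4} = (X + 2) f_{n+2} - f_n`;
this is the addition formula `sin((n+4)u) + sin(nu) = 2 cos 2u · sin((n+2)u)`, so
`f_n(2 cos 2u - 2) · sin u = sin(nu)` for odd `n`. With `u = π/p` this makes `2 cos(2π/p) - 2` a
root of the monic polynomial `f_p` of degree `(p-1)/2`. Conversely `ζ = exp(2πi/p)` is a root of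
`T² - 2 cos(2π/p) T + 1`, so `p - 1 = [ℚ(ζ) : ℚ] ≤ 2 [ℚ(cos(2π/p)) : ℚ]`, and `f_p` is minimal.
-/

noncomputable section

open Polynomial

/-- `ψ^i(X) := Σ_{j=1}^{i} (C(i,j)·C(i+j−1,j)/C(2j−1,j))·X^j ∈ ℚ[X]`; `ψ^0 = 0`. -/
def psiPoly (i : ℕ) : ℚ[X] :=
  ∑ j ∈ Finset.Icc 1 i,
    C (((i.choose j : ℚ) * ((i + j - 1).choose j : ℚ)) / ((2 * j - 1).choose j : ℚ)) * X ^ j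

/-- For odd `n ≥ 3`,
`f_n(X) := n + Σ_{j=1}^{(n−3)/2} (n·(n²−1²)·(n²−3²)⋯(n²−(2j−1)²)/(2^{2j}·(2j+1)!))·X^j
  + X^{(n−1)/2} ∈ ℚ[X]`. -/
def fPoly (n : ℕ) : ℚ[X] :=
  C (n : ℚ) +
    ∑ j ∈ Finset.Icc 1 ((n - 3) / 2),
      C (((n : ℚ) * ∏ i ∈ Finset.Icc 1 j, ((n : ℚ) ^ 2 - (2 * (i : ℚ) - 1) ^ 2)) /
          (2 ^ (2 * j) * ((2 * j + 1).factorial : ℚ))) * X ^ j +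
    X ^ ((n - 1) / 2)

/-- `(X+2)/2 ∈ ℚ[X]`. -/
def halfXAddTwo : ℚ[X] := C (1 / 2 : ℚ) * (X + 2)

open IntermediateField Real

theorem minpoly.natDegree_le_two_mul_of_sq_sub_mul_add_one {K L : Type*} [Field K] [Field L]
    [Algebra K L] {x y : L} (hx : IsIntegral K x) (hxy : y ^ 2 - x * y + 1 = 0) :
    (minpoly K y).natDegree ≤ 2 * (minpoly K x).natDegree := by
  set F := K⟮x⟯
  have : FiniteDimensional K F := adjoin.finiteDimensional hx
  have hq : Polynomial.aeval y (X ^ 2 - C (AdjoinSimple.gen K x) * X + 1 : F[X]) = 0 := by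
    simpa using hxy
  have hqm : (X ^ 2 - C (AdjoinSimple.gen K x) * X + 1 : F[X]).Monic := by monicity!
  have hyF : IsIntegral F y := ⟨_, hqm, hq⟩
  set E := F⟮y⟯
  have : FiniteDimensional F E := adjoin.finiteDimensional hyF
  have : FiniteDimensional K E := Module.Finite.trans F E
  have : Module.Free F E := Module.Free.of_divisionRing F E
  have hE : Module.finrank F E ≤ 2 := by
    rw [adjoin.finrank hyF]
    calc (minpoly F y).natDegree ≤ _ := natDegree_le_of_dvd (minpoly.dvd F y hq) hqm.ne_zero
      _ = 2 := by compute_degree!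
  have hy : (minpoly K y).natDegree ≤ Module.finrank K E := by
    have : IsScalarTower K E L := IsScalarTower.of_algebraMap_eq fun _ ↦ rfl
    have h := minpoly.natDegree_le (A := K) (⟨y, mem_adjoin_simple_self F y⟩ : E)
    rwa [← minpoly.algebraMap_eq (algebraMap E L).injective] at h
  rw [← Module.finrank_mul_finrank K F E, adjoin.finrank hx] at hy
  calc (minpoly K y).natDegree ≤ (minpoly K x).natDegree * Module.finrank F E := hy
    _ ≤ 2 * (minpoly K x).natDegree := by rw [mul_comm]; exact Nat.mul_le_mul_right _ hE

lemma minpoly.natDegree_sub_algebraMap {K L : Type*} [Field K] [CommRing L] [Algebra K L]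
    (x : L) (a : K) : (minpoly K (x - algebraMap K L a)).natDegree = (minpoly K x).natDegree := by
  rw [minpoly.sub_algebraMap, natDegree_comp, natDegree_X_add_C, mul_one]

theorem totient_le_two_mul_natDegree_minpoly_two_cos {n : ℕ} (hn : n ≠ 0) :
    n.totient ≤ 2 * (minpoly ℚ (2 * cos (2 * π / n))).natDegree := by
  set ζ := Complex.exp (2 * π * Complex.I / n)
  have hζ : IsPrimitiveRoot ζ n := Complex.isPrimitiveRoot_exp n hn
  have hcos : algebraMap ℝ ℂ (2 * cos (2 * π / n)) = ζ + ζ⁻¹ := by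
    rw [← Complex.exp_neg, Complex.coe_algebraMap]
    push_cast
    rw [Complex.two_cos]
    congr 2 <;> ring
  have hn₀ : 0 < n := Nat.pos_of_ne_zero hn
  have hζdeg : (minpoly ℚ ζ).natDegree = n.totient := by
    rw [← cyclotomic_eq_minpoly_rat hζ hn₀, natDegree_cyclotomic]
  rw [← minpoly.algebraMap_eq (algebraMap ℝ ℂ).injective, hcos, ← hζdeg]
  refine minpoly.natDegree_le_two_mul_of_sq_sub_mul_add_one
    (((hζ.isIntegral hn₀).add (hζ.inv.isIntegral hn₀)).tower_top) ?_
  field_simp [hζ.ne_zero hn]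
  ring

def fCoeff (x : ℚ) (j : ℕ) : ℚ :=
  (x * ∏ i ∈ Finset.Icc 1 j, (x ^ 2 - (2 * (i : ℚ) - 1) ^ 2)) /
    (2 ^ (2 * j) * ((2 * j + 1).factorial : ℚ))

lemma fCoeff_zero (x : ℚ) : fCoeff x 0 = x := by
  simp [fCoeff]

lemma prod_add_two_sq_sub_odd_sq (x : ℚ) (j : ℕ) :
    ∏ i ∈ Finset.Icc 1 (j + 1), ((x + 2) ^ 2 - (2 * (i : ℚ) - 1) ^ 2) =
      (∏ i ∈ Finset.Icc 1 j, (x ^ 2 - (2 * (i : ℚ) - 1) ^ 2)) *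
        ((x + 2 * j + 1) * (x + 2 * j + 3)) := by
  induction j with
  | zero =>
    rw [zero_add, Finset.Icc_self, Finset.prod_singleton, Finset.Icc_eq_empty_of_lt zero_lt_one,
      Finset.prod_empty]
    push_cast
    ring
  | succ j ih =>
    rw [Finset.prod_Icc_succ_top (by omega), ih, Finset.prod_Icc_succ_top (by omega)]
    push_cast
    ring

lemma prod_sub_two_sq_sub_odd_sq (x : ℚ) (j : ℕ) :
    ∏ i ∈ Finset.Icc 1 (j + 1), ((x - 2) ^ 2 - (2 * (i : ℚ) - 1) ^ 2) =
      (∏ i ∈ Finset.Icc 1 j, (x ^ 2 - (2 * (i : ℚ) - 1) ^ 2)) *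
        ((x - 2 * j - 1) * (x - 2 * j - 3)) := by
  have h := prod_add_two_sq_sub_odd_sq (-x) j
  simp only [neg_sq, neg_add_eq_sub, sub_sq_comm 2 x] at h
  rw [h]
  ring

lemma fCoeff_add_two_succ (x : ℚ) (j : ℕ) :
    fCoeff (x + 2) (j + 1) = 2 * fCoeff x (j + 1) + fCoeff x j - fCoeff (x - 2) (j + 1) := by
  have : ((2 * j + 1).factorial : ℚ) ≠ 0 := by positivity
  simp only [fCoeff]
  rw [prod_add_two_sq_sub_odd_sq, prod_sub_two_sq_sub_odd_sq,
    Finset.prod_Icc_succ_top (by omega), show 2 * (j + 1) + 1 = 2 * j + 1 + 1 + 1 by ring,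
    Nat.factorial_succ, Nat.factorial_succ]
  push_cast
  field_simp
  ring

lemma fCoeff_odd_of_lt {m j : ℕ} (h : m < j) : fCoeff (2 * m + 1) j = 0 := by
  rw [fCoeff, Finset.prod_eq_zero (i := m + 1) (by rw [Finset.mem_Icc]; omega) (by push_cast; ring),
    mul_zero, zero_div]

lemma odd_mul_prod_sq_sub_odd_sq (m : ℕ) :
    (2 * m + 1 : ℚ) * ∏ i ∈ Finset.Icc 1 m, ((2 * m + 1 : ℚ) ^ 2 - (2 * (i : ℚ) - 1) ^ 2) =
      2 ^ (2 * m) * ((2 * m + 1).factorial : ℚ) := by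
  induction m with
  | zero => simp
  | succ m ih =>
    have h := prod_add_two_sq_sub_odd_sq (2 * m + 1) m
    rw [show (2 * m + 1 + 2 : ℚ) = 2 * ↑(m + 1) + 1 by push_cast; ring] at h
    rw [h, show 2 * (m + 1) + 1 = 2 * m + 1 + 1 + 1 by ring, Nat.factorial_succ,
      Nat.factorial_succ]
    push_cast
    linear_combination (2 * (m : ℚ) + 3) * (2 * (4 * m + 4)) * ih

lemma fCoeff_odd_self (m : ℕ) : fCoeff (2 * m + 1) m = 1 := by
  rw [fCoeff, odd_mul_prod_sq_sub_odd_sq, div_self (by positivity)]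

/-- `f_{2m+1}` with all its coefficients given by `fCoeff`. It agrees with `fPoly (2 * m + 1)` only
for `m ≠ 0`: `fPoly 1 = 2` counts the constant term twice. -/
def fPolyOdd (m : ℕ) : ℚ[X] :=
  ∑ j ∈ Finset.range (m + 1), C (fCoeff (2 * m + 1) j) * X ^ j

lemma coeff_fPolyOdd (m k : ℕ) : (fPolyOdd m).coeff k = fCoeff (2 * m + 1) k := by
  simp only [fPolyOdd, finsetSum_coeff, coeff_C_mul_X_pow, Finset.sum_ite_eq,
    Finset.mem_range]
  split_ifs with h
  · rfl
  · exact (fCoeff_odd_of_lt (by omega)).symm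

lemma natDegree_fPolyOdd_le (m : ℕ) : (fPolyOdd m).natDegree ≤ m :=
  natDegree_sum_le_of_forall_le _ _ fun _ hj ↦
    (natDegree_C_mul_X_pow_le _ _).trans (Finset.mem_range_succ_iff.1 hj)

lemma natDegree_fPolyOdd (m : ℕ) : (fPolyOdd m).natDegree = m :=
  natDegree_eq_of_le_of_coeff_ne_zero (natDegree_fPolyOdd_le m)
    (by simp [coeff_fPolyOdd, fCoeff_odd_self])

lemma monic_fPolyOdd (m : ℕ) : (fPolyOdd m).Monic :=
  monic_of_natDegree_le_of_coeff_eq_one m (natDegree_fPolyOdd_le m)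
    (by rw [coeff_fPolyOdd, fCoeff_odd_self])

lemma fPolyOdd_zero : fPolyOdd 0 = 1 := by
  simp [fPolyOdd, fCoeff_zero]

lemma fPolyOdd_one : fPolyOdd 1 = X + 3 := by
  norm_num [fPolyOdd, Finset.sum_range_succ, fCoeff, Nat.factorial, C_ofNat, add_comm]

lemma fPolyOdd_add_two (m : ℕ) :
    fPolyOdd (m + 2) = (X + 2) * fPolyOdd (m + 1) - fPolyOdd m := by
  ext (_ | j)
  · simp only [coeff_fPolyOdd, fCoeff_zero, coeff_sub, mul_coeff_zero, coeff_add, coeff_X_zero,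
      coeff_ofNat_zero]
    push_cast
    ring
  · simp only [coeff_fPolyOdd, add_mul, coeff_sub, coeff_add, coeff_X_mul, coeff_ofNat_mul]
    push_cast
    rw [show 2 * ((m : ℚ) + 2) + 1 = 2 * (m + 1) + 1 + 2 by ring, fCoeff_add_two_succ,
      show 2 * ((m : ℚ) + 1) + 1 - 2 = 2 * m + 1 by ring]
    ring

lemma fPoly_eq_fPolyOdd {m : ℕ} (hm : m ≠ 0) : fPoly (2 * m + 1) = fPolyOdd m := by
  rw [fPolyOdd, Finset.sum_range_succ, Finset.sum_range_eq_add_Ico _ (Nat.pos_of_ne_zero hm),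
    fCoeff_odd_self, fCoeff_zero, fPoly]
  have hIcc : Finset.Icc 1 ((2 * m + 1 - 3) / 2) = Finset.Ico 1 m := by
    ext
    simp only [Finset.mem_Icc, Finset.mem_Ico]
    omega
  rw [hIcc, show (2 * m + 1 - 1) / 2 = m by omega, pow_zero, mul_one, map_one, one_mul]
  push_cast
  rfl

lemma aeval_fPolyOdd_mul_sin (m : ℕ) (u : ℝ) :
    aeval (2 * cos (2 * u) - 2) (fPolyOdd m) * sin u = sin ((2 * m + 1) * u) := by
  induction m using Nat.twoStepInduction with
  | zero => simp [fPolyOdd_zero]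
  | one =>
    simp only [fPolyOdd_one, map_add, aeval_X, map_ofNat, cos_two_mul, cos_sq', Nat.cast_one,
      show (2 * 1 + 1 : ℝ) = 3 by norm_num]
    linear_combination -sin_three_mul u
  | more m ih₀ ih₁ =>
    rw [fPolyOdd_add_two]
    simp only [map_sub, map_mul, map_add, aeval_X, map_ofNat]
    push_cast at ih₁ ⊢
    have hadd := sin_add ((2 * m + 3) * u) (2 * u)
    have hsub := sin_sub ((2 * m + 3) * u) (2 * u)
    rw [show (2 * m + 3) * u + 2 * u = (2 * (m + 2) + 1) * u by ring] at hadd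
    rw [show (2 * m + 3) * u - 2 * u = (2 * m + 1) * u by ring] at hsub
    rw [show (2 * (m + 1) + 1) * u = (2 * m + 3) * u by ring] at ih₁
    linear_combination 2 * cos (2 * u) * ih₁ - ih₀ - hadd - hsub

lemma aeval_fPolyOdd_two_cos_sub_two {m : ℕ} (hm : m ≠ 0) :
    aeval (2 * cos (2 * π / (2 * m + 1 : ℕ)) - 2) (fPolyOdd m) = 0 := by
  set u := π / (2 * m + 1 : ℕ)
  have hu : sin u ≠ 0 :=
    (sin_pos_of_pos_of_lt_pi (by positivity) (div_lt_self pi_pos (by norm_cast; omega))).ne'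
  have h := aeval_fPolyOdd_mul_sin m u
  rw [show (2 * m + 1) * u = π by simp only [u]; push_cast; field_simp, sin_pi,
    show 2 * u = 2 * π / (2 * m + 1 : ℕ) by simp only [u]; ring] at h
  exact (mul_eq_zero.1 h).resolve_right hu

/-- For every odd prime `p`, `f_p` is the minimal polynomial over `ℚ` of
the real algebraic number `2·cos(2π/p) − 2`. -/
theorem fPoly_eq_minpoly (p : ℕ) (hp : p.Prime) (hodd : Odd p) :
    minpoly ℚ (2 * Real.cos (2 * Real.pi / p) - 2) = fPoly p := by
  obtain ⟨m, rfl⟩ := hodd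
  have hm : m ≠ 0 := by
    rintro rfl
    exact Nat.not_prime_one hp
  have hroot := aeval_fPolyOdd_two_cos_sub_two hm
  have hdeg : m ≤ (minpoly ℚ (2 * cos (2 * π / (2 * m + 1 : ℕ)) - 2)).natDegree := by
    have h := totient_le_two_mul_natDegree_minpoly_two_cos hp.ne_zero
    have hshift := minpoly.natDegree_sub_algebraMap (K := ℚ)
      (2 * cos (2 * π / (2 * m + 1 : ℕ))) 2
    rw [map_ofNat] at hshift
    rw [Nat.totient_prime hp, ← hshift] at h
    omega
  rw [fPoly_eq_fPolyOdd hm]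
  exact (eq_of_monic_of_dvd_of_natDegree_le (minpoly.monic ⟨_, monic_fPolyOdd m, hroot⟩)
    (monic_fPolyOdd m) (minpoly.dvd ℚ _ hroot) (by rwa [natDegree_fPolyOdd])).symm
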